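/- arXiv:1603.04813 — 3 statements merged into one kernel-verified Lean document; each statement's English description precedes it below -/
import Mathlib

section
/- Let K be a field, n > 1, and a ∈ K[s]^n a nonzero row vector of degree d, with associated coefficient matrix A, basic non-pivotal index set q̃, and row-echelon null vectors b_i. Then the leading vectors LV(b_r^♭), for r ∈ q̃, are linearly independent over K. -/
open Polynomial
open scoped Classical

noncomputable section

/-- The degree of a polynomial vector: the maximum of the degrees of the entries. -/
def vdeg {K : Type*} [Field K] {n : ℕ} (h : Fin n → K[X]) : ℕ :=
  Finset.univ.sup fun i => (h i).natDegree

/-- The leading vector of a polynomial vector: the vector of coefficients of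
`s ^ (vdeg h)` in the entries. -/
def LV {K : Type*} [Field K] {n : ℕ} (h : Fin n → K[X]) : Fin n → K :=
  fun i => (h i).coeff (vdeg h)

/-- The syzygy module of a row vector `a` of polynomials. -/
def syz {K : Type*} [Field K] {n : ℕ} (a : Fin n → K[X]) :
    Submodule K[X] (Fin n → K[X]) where
  carrier := {h | ∑ i, a i * h i = 0}
  add_mem' := by
    intro x y hx hy
    simp only [Set.mem_setOf_eq] at *
    simp only [Pi.add_apply, mul_add, Finset.sum_add_distrib, hx, hy, add_zero]
  zero_mem' := by simp
  smul_mem' := by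
    intro c x hx
    simp only [Set.mem_setOf_eq] at *
    have h1 : ∑ i, a i * (c • x) i = c * ∑ i, a i * x i := by
      rw [Finset.mul_sum]
      refine Finset.sum_congr rfl fun i _ => ?_
      simp only [Pi.smul_apply, smul_eq_mul]
      ring
    rw [h1, hx, mul_zero]

/-- The coefficient matrix `A ∈ K^{(2d+1) × n(d+1)}` associated with a polynomial row
vector `a` of degree at most `d`:  `A_{k+1, i+jn} = c_{k-j,i}` where `c_m` is the vector of
coefficients of `s^m` in `a` (with `c_m = 0` for `m < 0` or `m > d`). -/
def coefA {K : Type*} [Field K] {n : ℕ} (d : ℕ) (hn : 0 < n) (a : Fin n → K[X]) :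
    Matrix (Fin (2*d+1)) (Fin (n*(d+1))) K :=
  Matrix.of fun k ℓ =>
    if (ℓ : ℕ) / n ≤ (k : ℕ) then
      (a ⟨(ℓ : ℕ) % n, Nat.mod_lt _ hn⟩).coeff ((k : ℕ) - (ℓ : ℕ) / n)
    else 0

/-- The `♭` isomorphism `K^{n(d+1)} → K[s]^n`: split `v` into `d+1` consecutive blocks
`w_0, …, w_d ∈ K^n` and form `∑_j s^j w_j`. -/
def flatv {K : Type*} [Field K] {n : ℕ} (d : ℕ) (v : Fin (n*(d+1)) → K) : Fin n → K[X] :=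
  fun i => ∑ j : Fin (d+1), C (v ⟨(i:ℕ) + (j:ℕ)*n, by
    calc (i:ℕ) + (j:ℕ)*n < n + (j:ℕ)*n := Nat.add_lt_add_right i.isLt _
      _ = n * ((j:ℕ)+1) := by ring
      _ ≤ n * (d+1) := Nat.mul_le_mul le_rfl j.isLt⟩) * X ^ (j:ℕ)

/-- The `♭` isomorphism `K^m → K[s]` for scalars. -/
def flat1 {K : Type*} [Field K] {m : ℕ} (w : Fin m → K) : K[X] :=
  ∑ k : Fin m, C (w k) * X ^ (k:ℕ)

/-- A column index `j` of a matrix is pivotal if the `j`-th column is not a `K`-linear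
combination of the columns of smaller index. -/
def Pivotal {K : Type*} [Field K] {m N : ℕ} (A : Matrix (Fin m) (Fin N) K) (j : Fin N) : Prop :=
  (fun k => A k j) ∉ Submodule.span K ((fun r : Fin N => fun k => A k r) '' {r | r < j})

/-- A basic non-pivotal index: the minimal non-pivotal index in its residue class modulo `n`. -/
def BasicNP {K : Type*} [Field K] {m N : ℕ} (n : ℕ) (A : Matrix (Fin m) (Fin N) K)
    (r : Fin N) : Prop :=
  ¬ Pivotal A r ∧ ∀ r' : Fin N, ¬ Pivotal A r' → (r':ℕ) % n = (r:ℕ) % n → r ≤ r'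

/-- `B` encodes, for each non-pivotal index `i`, the row-echelon null vector
`b_i = e_i − v_i`: `(b_i)_i = 1`, `(b_i)_j = −α_j` for pivotal `j < i` where
`A_{*i} = Σ α_j A_{*j}`, and all other entries vanish.  Equivalently, `b_i ∈ ker A`,
`(b_i)_i = 1` and `(b_i)_j = 0` unless `j = i` or `j` is pivotal with `j < i`. -/
def IsEchelonNull {K : Type*} [Field K] {m N : ℕ} (A : Matrix (Fin m) (Fin N) K)
    (B : Fin N → Fin N → K) : Prop :=
  ∀ i : Fin N, ¬ Pivotal A i →
    A.mulVec (B i) = 0 ∧ B i i = 1 ∧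
    ∀ j : Fin N, j ≠ i → ¬ (Pivotal A j ∧ j < i) → B i j = 0

/-- Shift an index by `t`, modulo the size (used only when `j + t` is in range). -/
def shiftIdx {N : ℕ} (j : Fin N) (t : ℕ) : Fin N :=
  ⟨((j:ℕ) + t) % N, Nat.mod_lt _ j.pos⟩

section Aux

variable {K : Type*} [Field K] {n d : ℕ}

lemma flatv_coeff (v : Fin (n*(d+1)) → K) (i : Fin n) (t : ℕ) (ht : t < d+1)
    (hb : (i:ℕ) + t*n < n*(d+1)) :
    (flatv d v i).coeff t = v ⟨(i:ℕ) + t*n, hb⟩ := by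
  unfold flatv
  rw [finset_sum_coeff]
  rw [Finset.sum_eq_single (⟨t, ht⟩ : Fin (d+1))]
  · simp
  · intro j _ hj
    have hjt : t ≠ (j:ℕ) := by
      intro h; apply hj; ext; exact h.symm
    simp [coeff_C_mul, coeff_X_pow, hjt]
  · simp

lemma flatv_coeff_high (v : Fin (n*(d+1)) → K) (i : Fin n) (t : ℕ) (ht : d+1 ≤ t) :
    (flatv d v i).coeff t = 0 := by
  unfold flatv
  rw [finset_sum_coeff]
  apply Finset.sum_eq_zero
  intro j _
  have hjt : t ≠ (j:ℕ) := by
    intro h; exact absurd (h ▸ j.isLt) (not_lt.mpr ht)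
  simp [coeff_C_mul, coeff_X_pow, hjt]

end Aux


lemma LV_flatv_struct {K : Type*} [Field K] {n d : ℕ} (hn : 0 < n)
    (w : Fin (n*(d+1)) → K) (r : Fin (n*(d+1)))
    (hr1 : w r = 1)
    (hr0 : ∀ j : Fin (n*(d+1)), r < j → w j = 0) :
    vdeg (flatv d w) = (r:ℕ)/n ∧
    (∀ c : Fin n, (c:ℕ) = (r:ℕ) % n → LV (flatv d w) c = 1) ∧
    (∀ c : Fin n, (r:ℕ) % n < (c:ℕ) → LV (flatv d w) c = 0) := by
  set D := (r:ℕ)/n with hDdef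
  have hDd : D < d+1 := by
    rw [hDdef, Nat.div_lt_iff_lt_mul hn]
    calc (r:ℕ) < n*(d+1) := r.isLt
      _ = (d+1)*n := by ring
  have hrval : (r:ℕ) % n + D * n = (r:ℕ) := Nat.mod_add_div' (r:ℕ) n
  -- high coefficients vanish
  have hhigh : ∀ (i : Fin n) (t : ℕ), D < t → (flatv d w i).coeff t = 0 := by
    intro i t ht
    rcases lt_or_ge t (d+1) with htd | htd
    · have hb : (i:ℕ) + t*n < n*(d+1) := by
        calc (i:ℕ) + t*n < n + t*n := Nat.add_lt_add_right i.isLt _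
          _ = n*(t+1) := by ring
          _ ≤ n*(d+1) := Nat.mul_le_mul le_rfl htd
      rw [flatv_coeff w i t htd hb]
      apply hr0
      show (r:ℕ) < (i:ℕ) + t*n
      calc (r:ℕ) = (r:ℕ) % n + D*n := hrval.symm
        _ < n + D*n := Nat.add_lt_add_right (Nat.mod_lt _ hn) _
        _ = (D+1)*n := by ring
        _ ≤ t*n := Nat.mul_le_mul_right _ ht
        _ ≤ (i:ℕ) + t*n := Nat.le_add_left _ _
    · exact flatv_coeff_high w i t htd
  have hdegle : ∀ i : Fin n, (flatv d w i).natDegree ≤ D := by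
    intro i
    rw [Polynomial.natDegree_le_iff_coeff_eq_zero]
    intro t ht; exact hhigh i t ht
  -- the diagonal coefficient is 1
  have hcoeff1 : ∀ c : Fin n, (c:ℕ) = (r:ℕ) % n → (flatv d w c).coeff D = 1 := by
    intro c hc
    have hb : (c:ℕ) + D*n < n*(d+1) := by
      rw [hc, hrval]; exact r.isLt
    rw [flatv_coeff w c D hDd hb]
    have : (⟨(c:ℕ) + D*n, hb⟩ : Fin (n*(d+1))) = r := by
      apply Fin.ext; show (c:ℕ) + D*n = (r:ℕ); rw [hc]; exact hrval
    rw [this, hr1]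
  have hvdeg : vdeg (flatv d w) = D := by
    apply le_antisymm
    · exact Finset.sup_le fun i _ => hdegle i
    · have c0 : Fin n := ⟨(r:ℕ) % n, Nat.mod_lt _ hn⟩
      calc D ≤ (flatv d w ⟨(r:ℕ) % n, Nat.mod_lt _ hn⟩).natDegree := by
              apply Polynomial.le_natDegree_of_ne_zero
              rw [hcoeff1 _ rfl]; exact one_ne_zero
        _ ≤ vdeg (flatv d w) := Finset.le_sup (f := fun i => (flatv d w i).natDegree) (Finset.mem_univ _)
  refine ⟨hvdeg, ?_, ?_⟩
  · intro c hc
    show (flatv d w c).coeff (vdeg (flatv d w)) = 1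
    rw [hvdeg]; exact hcoeff1 c hc
  · intro c hc
    show (flatv d w c).coeff (vdeg (flatv d w)) = 0
    rw [hvdeg]
    have hb : (c:ℕ) + D*n < n*(d+1) := by
      calc (c:ℕ) + D*n < n + D*n := Nat.add_lt_add_right c.isLt _
        _ = n*(D+1) := by ring
        _ ≤ n*(d+1) := Nat.mul_le_mul le_rfl hDd
    rw [flatv_coeff w c D hDd hb]
    apply hr0
    show (r:ℕ) < (c:ℕ) + D*n
    calc (r:ℕ) = (r:ℕ) % n + D*n := hrval.symm
      _ < (c:ℕ) + D*n := Nat.add_lt_add_right hc _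

/-- Lemma: independence of the leading vectors.  The leading vectors
`LV (b_r^♭)`, for `r` ranging over the basic non-pivotal indices of the coefficient
matrix `A`, are linearly independent over `K`. -/
theorem leading_vectors_of_basic_row_echelon_syzygies_independent {K : Type*} [Field K]
    {n : ℕ} (hn : 1 < n) (a : Fin n → K[X]) (ha : a ≠ 0) {d : ℕ} (hd : vdeg a = d)
    (A : Matrix (Fin (2*d+1)) (Fin (n*(d+1))) K)
    (hA : A = coefA d (Nat.zero_lt_of_lt hn) a)
    (B : Fin (n*(d+1)) → Fin (n*(d+1)) → K) (hB : IsEchelonNull A B) :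
    LinearIndependent K
      (fun r : {r : Fin (n*(d+1)) // BasicNP n A r} => LV (flatv d (B r.1))) := by
  have hn0 : 0 < n := Nat.zero_lt_of_lt hn
  -- structure of the leading vectors
  have hstruct : ∀ r : Fin (n*(d+1)), ¬ Pivotal A r →
      (∀ c : Fin n, (c:ℕ) = (r:ℕ) % n → LV (flatv d (B r)) c = 1) ∧
      (∀ c : Fin n, (r:ℕ) % n < (c:ℕ) → LV (flatv d (B r)) c = 0) := by
    intro r hr
    obtain ⟨-, hB1, hB0⟩ := hB r hr
    have h := LV_flatv_struct hn0 (B r) r hB1 (fun j hj => hB0 j (Fin.ne_of_gt hj)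
      (fun hh => absurd hh.2 (not_lt.mpr (le_of_lt hj))))
    exact ⟨h.2.1, h.2.2⟩
  rw [Fintype.linearIndependent_iff]
  intro g hg
  by_contra hne
  push_neg at hne
  obtain ⟨i0, hi0⟩ := hne
  set S := Finset.univ.filter (fun i : {r : Fin (n*(d+1)) // BasicNP n A r} => g i ≠ 0) with hS
  have hSne : S.Nonempty := ⟨i0, by simp [hS, hi0]⟩
  obtain ⟨r0, hr0S, hr0max⟩ := Finset.exists_max_image S (fun i => ((i.1:ℕ)) % n) hSne
  have hgr0 : g r0 ≠ 0 := by
    rw [hS] at hr0S; exact (Finset.mem_filter.mp hr0S).2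
  set c0 : Fin n := ⟨(r0.1:ℕ) % n, Nat.mod_lt _ hn0⟩ with hc0
  have hg0 := congrFun hg c0
  rw [Finset.sum_apply] at hg0
  simp only [Pi.smul_apply, smul_eq_mul, Pi.zero_apply] at hg0
  rw [Finset.sum_eq_single r0] at hg0
  · rw [(hstruct r0.1 r0.2.1).1 c0 rfl, mul_one] at hg0
    exact hgr0 hg0
  · intro i _ hir0
    rcases eq_or_ne (g i) 0 with h0 | h0
    · rw [h0, zero_mul]
    · have hiS : i ∈ S := by simp [hS, h0]
      have hle := hr0max i hiS
      have hne' : (i.1:ℕ) % n ≠ (r0.1:ℕ) % n := by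
        intro heq
        apply hir0
        have h1 := i.2.2 r0.1 r0.2.1 heq.symm
        have h2 := r0.2.2 i.1 i.2.1 heq
        exact Subtype.ext (le_antisymm h1 h2)
      have hlt : (i.1:ℕ) % n < (c0:ℕ) := lt_of_le_of_ne hle hne'
      rw [(hstruct i.1 i.2.1).2 c0 hlt, mul_zero]
  · intro h; exact absurd (Finset.mem_univ r0) h
end
end

section
/- Let K be a field, n > 1, and a ∈ K[s]^n a nonzero row vector. Then the syzygy module syz(a) is a free K[s]-module of rank n − 1; moreover, there exist n − 1 elements u_1,...,u_{n-1} of syz(a) that form a basis of syz(a) as a K[s]-module and whose leading vectors LV(u_1),...,LV(u_{n-1}) are linearly independent over K (i.e., a μ-basis of a exists). -/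
open Polynomial
open scoped Classical

noncomputable section

/-! The syzygy module is the kernel of a nonzero linear form on `K[s]^n`; over the PID `K[s]` it is
free, and rank–nullity gives rank `n - 1`. Among its bases choose one of minimal total degree. If
the leading vectors of `u_1, …, u_m` were dependent, `∑ c_i LV(u_i) = 0`, let `u_{i₀}` have the
largest degree `d` with `c_{i₀} ≠ 0`; then `∑ c_i s^(d - deg u_i) u_i` has degree `< d`, and since
its coefficient at `u_{i₀}` is the unit `c_{i₀}` it may replace `u_{i₀}` in the basis, lowering the
total degree. -/

section UpdateSum

variable {R M ι : Type*} [AddCommGroup M] [Fintype ι] [DecidableEq ι]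

open Function Submodule in
lemma span_range_update_sum [Ring R] [Module R M] (v : ι → M) {w : ι → R} {i : ι}
    (hw : IsUnit (w i)) :
    span R (Set.range (update v i (∑ j, w j • v j))) = span R (Set.range v) := by
  set S := span R (Set.range (update v i (∑ j, w j • v j)))
  have hS : ∀ k ≠ i, v k ∈ S := fun k hk =>
    update_of_ne hk (∑ j, w j • v j) v ▸ subset_span (Set.mem_range_self k)
  apply le_antisymm
  · rw [span_le, Set.range_subset_iff]
    intro j
    rcases eq_or_ne j i with rfl | hj
    · rw [update_self]
      exact sum_mem fun k _ => smul_mem _ _ (subset_span (Set.mem_range_self k))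
    · rw [update_of_ne hj]
      exact subset_span (Set.mem_range_self j)
  · rw [span_le, Set.range_subset_iff]
    intro j
    rcases eq_or_ne j i with rfl | hj
    · have hsum : ∑ k, w k • v k ∈ S := by
        simpa using subset_span (Set.mem_range_self (f := update v j (∑ k, w k • v k)) j)
      rw [← Finset.add_sum_erase _ (fun k => w k • v k) (Finset.mem_univ j)] at hsum
      have hwj : w j • v j ∈ S := by
        have hrest : ∑ k ∈ Finset.univ.erase j, w k • v k ∈ S :=
          sum_mem fun k hk => smul_mem _ _ (hS k (Finset.ne_of_mem_erase hk))
        simpa only [add_sub_cancel_right] using sub_mem hsum hrest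
      obtain ⟨u, hu⟩ := hw
      rw [← hu] at hwj
      exact (smul_mem_iff' S u).mp hwj
    · exact hS j hj

lemma LinearIndependent.update_sum [CommRing R] [Module R M] {v : ι → M}
    (hv : LinearIndependent R v) {w : ι → R} {i : ι} (hw : w i ∈ nonZeroDivisors R) :
    LinearIndependent R (Function.update v i (∑ j, w j • v j)) :=
  hv.update i _ ⟨1, one_mem _, Finsupp.equivFunOnFinite.symm w, hw, by
    simp [Finsupp.linearCombination_apply, Finsupp.sum_fintype]⟩

end UpdateSum

lemma rank_ker_add_one {R : Type*} [CommRing R] [IsDomain R] {m : ℕ}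
    (f : (Fin m → R) →ₗ[R] R) (hf : f ≠ 0) :
    Module.rank R (LinearMap.ker f) + 1 = m := by
  have hrange : Module.rank R (LinearMap.range f) = 1 := by
    refine le_antisymm ((Submodule.rank_le _).trans (Module.rank_self R).le) ?_
    obtain ⟨x, hx⟩ := DFunLike.ne_iff.mp hf
    exact Cardinal.one_le_iff_pos.mpr
      (rank_pos_iff_exists_ne_zero.mpr ⟨⟨f x, LinearMap.mem_range_self f x⟩, by simpa using hx⟩)
  rw [← rank_fin_fun (R := R) m, ← LinearMap.rank_range_add_rank_ker f, hrange, add_comm]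

section LeadingVector

variable {K : Type*} [Field K] {n : ℕ}

lemma syz_eq_ker (a : Fin n → K[X]) :
    syz a = LinearMap.ker (Fintype.linearCombination K[X] a) := by
  ext h
  simp [syz, Fintype.linearCombination_apply, mul_comm]

lemma rank_syz_add_one {a : Fin n → K[X]} (ha : a ≠ 0) : Module.rank K[X] (syz a) + 1 = n := by
  rw [syz_eq_ker, rank_ker_add_one]
  obtain ⟨i, hi⟩ := Function.ne_iff.mp ha
  exact DFunLike.ne_iff.mpr
    ⟨Pi.single i 1, by simpa [Fintype.linearCombination_apply, Pi.single_apply] using hi⟩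

lemma natDegree_le_vdeg (h : Fin n → K[X]) (j : Fin n) : (h j).natDegree ≤ vdeg h :=
  Finset.le_sup (f := fun i => (h i).natDegree) (Finset.mem_univ j)

lemma coeff_X_pow_sub_vdeg_mul {h : Fin n → K[X]} {d k : ℕ} (hd : vdeg h ≤ d) (hk : d ≤ k)
    (j : Fin n) : (X ^ (d - vdeg h) * h j).coeff k = if k = d then LV h j else 0 := by
  rw [coeff_X_pow_mul', if_pos (by omega)]
  split_ifs with hkd
  · subst hkd
    rw [LV, Nat.sub_sub_self hd]
  · exact coeff_eq_zero_of_natDegree_lt (by have := natDegree_le_vdeg h j; omega)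

lemma vdeg_lt_of_coeff_eq_zero {v : Fin n → K[X]} {d : ℕ} (hv : v ≠ 0)
    (h : ∀ j k, d ≤ k → (v j).coeff k = 0) : vdeg v < d := by
  have hdeg : ∀ j, (v j).degree < d := fun j => (degree_lt_iff_coeff_zero _ _).mpr (h j)
  obtain ⟨j₀, hj₀⟩ := Function.ne_iff.mp hv
  have hd : 0 < d := by
    have := hdeg j₀
    rw [← natDegree_lt_iff_degree_lt hj₀] at this
    omega
  refine (Finset.sup_lt_iff (show (⊥ : ℕ) < d from hd)).mpr fun j _ => ?_
  rcases eq_or_ne (v j) 0 with hj | hj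
  · simpa [hj] using hd
  · exact (natDegree_lt_iff_degree_lt hj).mpr (hdeg j)

open Function Submodule in
lemma exists_vdeg_sum_lt_of_not_linearIndependent_LV {m : ℕ} {u : Fin m → Fin n → K[X]}
    (hu : LinearIndependent K[X] u) (hLV : ¬ LinearIndependent K fun i => LV (u i)) :
    ∃ u' : Fin m → Fin n → K[X], LinearIndependent K[X] u' ∧
      span K[X] (Set.range u') = span K[X] (Set.range u) ∧
      ∑ i, vdeg (u' i) < ∑ i, vdeg (u i) := by
  obtain ⟨c, hc, i₁, hi₁⟩ := Fintype.not_linearIndependent_iff.mp hLV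
  obtain ⟨i₀, hi₀, hmax⟩ := (Finset.univ.filter (c · ≠ 0)).exists_max_image
    (fun i => vdeg (u i)) ⟨i₁, by simpa using hi₁⟩
  simp only [Finset.mem_filter, Finset.mem_univ, true_and] at hi₀ hmax
  set d := vdeg (u i₀)
  set w : Fin m → K[X] := fun i => C (c i) * X ^ (d - vdeg (u i))
  have hw₀ : w i₀ = C (c i₀) := by simp [w, d]
  set v := ∑ i, w i • u i
  have hv : v ≠ 0 := fun h0 => hi₀ <| by
    simpa [hw₀] using Fintype.linearIndependent_iff.mp hu w h0 i₀
  have hterm : ∀ i j k, d ≤ k →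
      ((w i • u i) j).coeff k = if k = d then c i * LV (u i) j else 0 := by
    intro i j k hk
    by_cases hci : c i = 0
    · simp [w, hci]
    · rw [Pi.smul_apply, smul_eq_mul, mul_assoc, coeff_C_mul,
        coeff_X_pow_sub_vdeg_mul (hmax i hci) hk, mul_ite, mul_zero]
  have hvd : vdeg v < d := vdeg_lt_of_coeff_eq_zero hv fun j k hk => by
    rw [show v j = ∑ i, (w i • u i) j from Finset.sum_apply _ _ _, finsetSum_coeff,
      Finset.sum_congr rfl fun i _ => hterm i j k hk]
    split_ifs
    · simpa using congrFun hc j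
    · simp
  refine ⟨update u i₀ v, hu.update_sum (by simpa [hw₀] using hi₀),
    span_range_update_sum u (by simpa [hw₀] using hi₀), ?_⟩
  refine Finset.sum_lt_sum (fun i _ => ?_) ⟨i₀, Finset.mem_univ _, by simpa using hvd⟩
  rcases eq_or_ne i i₀ with rfl | hi
  · simpa using hvd.le
  · rw [update_of_ne hi]

lemma exists_span_eq_linearIndependent_LV {m : ℕ} {u : Fin m → Fin n → K[X]}
    (hu : LinearIndependent K[X] u) :
    ∃ u' : Fin m → Fin n → K[X], LinearIndependent K[X] u' ∧
      Submodule.span K[X] (Set.range u') = Submodule.span K[X] (Set.range u) ∧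
      LinearIndependent K fun i => LV (u' i) := by
  induction hN : ∑ i, vdeg (u i) using Nat.strong_induction_on generalizing u with
  | _ N ih =>
    by_cases hLV : LinearIndependent K fun i => LV (u i)
    · exact ⟨u, hu, rfl, hLV⟩
    obtain ⟨u', hu', hspan, hlt⟩ := exists_vdeg_sum_lt_of_not_linearIndependent_LV hu hLV
    obtain ⟨u'', hu'', hspan', hLV''⟩ := ih _ (hN ▸ hlt) hu' rfl
    exact ⟨u'', hu'', hspan'.trans hspan, hLV''⟩

end LeadingVector

theorem mu_basis_exists_general {K : Type*} [Field K] {n : ℕ}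
    (a : Fin n → K[X]) (ha : a ≠ 0) :
    Module.Free K[X] ↥(syz a) ∧
    Module.rank K[X] ↥(syz a) = ((n - 1 : ℕ) : Cardinal) ∧
    ∃ u : Fin (n-1) → Fin n → K[X],
      (∀ i, u i ∈ syz a) ∧
      LinearIndependent K[X] u ∧
      Submodule.span K[X] (Set.range u) = syz a ∧
      LinearIndependent K (fun i => LV (u i)) := by
  obtain ⟨m, b⟩ := Submodule.basisOfPid (Pi.basisFun K[X] (Fin n)) (syz a)
  have hm : m = n - 1 := by
    have h := rank_syz_add_one ha
    rw [rank_eq_card_basis b, Fintype.card_fin] at h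
    norm_cast at h
    omega
  subst hm
  refine ⟨.of_basis b, by rw [rank_eq_card_basis b, Fintype.card_fin], ?_⟩
  obtain ⟨u, hu, hspan, hLV⟩ := exists_span_eq_linearIndependent_LV
    (b.linearIndependent.map' (syz a).subtype (Submodule.ker_subtype _))
  rw [Set.range_comp, Submodule.span_image, b.span_eq, Submodule.map_subtype_top] at hspan
  exact ⟨u, fun i => hspan ▸ Submodule.subset_span (Set.mem_range_self i), hu, hspan, hLV⟩

/-- existence of a μ-basis; freeness of the syzygy module.
For a nonzero row vector `a ∈ K[s]^n` with `n > 1`, the syzygy module `syz a` is a free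
`K[s]`-module of rank `n − 1`; moreover there exist `n − 1` syzygies `u_1, …, u_{n-1}`
that form a basis of `syz a` over `K[s]` and whose leading vectors are linearly
independent over `K` (i.e. a μ-basis exists). -/
theorem mu_basis_exists {K : Type*} [Field K] {n : ℕ} (hn : 1 < n)
    (a : Fin n → K[X]) (ha : a ≠ 0) :
    Module.Free K[X] ↥(syz a) ∧
    Module.rank K[X] ↥(syz a) = ((n - 1 : ℕ) : Cardinal) ∧
    ∃ u : Fin (n-1) → Fin n → K[X],
      (∀ i, u i ∈ syz a) ∧
      LinearIndependent K[X] u ∧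
      Submodule.span K[X] (Set.range u) = syz a ∧
      LinearIndependent K (fun i => LV (u i)) :=
  mu_basis_exists_general a ha
end
end

section
/- Let K be a field, n > 1, and a ∈ K[s]^n a nonzero row vector of degree d, with associated coefficient matrix A, non-pivotal index set q, and row-echelon null vectors b_i. Then for every r ∈ q, the degree of the row-echelon syzygy b_r^♭ equals ⌈r/n⌉ − 1. -/
open Polynomial
open scoped Classical

noncomputable section

/-- degrees of the row-echelon syzygies.  Indices are 0-based: the
0-based index `r` corresponds to the 1-based index `r+1`, and `⌈(r+1)/n⌉ − 1 = r / n`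
(floor division).  For every non-pivotal index `r` of the coefficient matrix `A`, the
degree of the row-echelon syzygy `b_r^♭` equals `⌈(r+1)/n⌉ − 1 = r / n`. -/
theorem degree_of_row_echelon_syzygy {K : Type*} [Field K] {n : ℕ} (hn : 1 < n)
    (a : Fin n → K[X]) (ha : a ≠ 0) {d : ℕ} (hd : vdeg a = d)
    (A : Matrix (Fin (2*d+1)) (Fin (n*(d+1))) K)
    (hA : A = coefA d (Nat.zero_lt_of_lt hn) a)
    (B : Fin (n*(d+1)) → Fin (n*(d+1)) → K) (hB : IsEchelonNull A B) :
    ∀ r : Fin (n*(d+1)), ¬ Pivotal A r →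
      vdeg (flatv d (B r)) = ((r:ℕ) + 1 + n - 1) / n - 1 := by
  intro r hr
  obtain ⟨-, h2, h3⟩ := hB r hr
  have hn0 : 0 < n := Nat.zero_lt_of_lt hn
  have hz : ∀ j : Fin (n*(d+1)), r < j → B r j = 0 := by
    intro j hj
    exact h3 j (ne_of_gt hj) (fun hc => absurd hc.2 (not_lt.2 hj.le))
  set j₀ : ℕ := (r:ℕ) / n with hj₀def
  have hrhs : ((r:ℕ) + 1 + n - 1) / n - 1 = j₀ := by
    have h1 : (r:ℕ) + 1 + n - 1 = (r:ℕ) + n := by omega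
    rw [h1, Nat.add_div_right _ hn0, hj₀def]
    exact Nat.add_sub_cancel _ _
  rw [hrhs]
  have hj₀ : j₀ < d + 1 := by
    rw [hj₀def, Nat.div_lt_iff_lt_mul hn0]
    exact lt_of_lt_of_eq r.isLt (mul_comm n (d+1))
  -- high coefficients vanish
  have h_hi : ∀ (i : Fin n) (m : ℕ), j₀ < m → (flatv d (B r) i).coeff m = 0 := by
    intro i m hm
    simp only [flatv, Polynomial.finset_sum_coeff, Polynomial.coeff_C_mul,
      Polynomial.coeff_X_pow, mul_ite, mul_one, mul_zero]
    refine Finset.sum_eq_zero fun j _ => ?_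
    by_cases hmj : m = (j:ℕ)
    · rw [if_pos hmj]
      apply hz
      show (r:ℕ) < (i:ℕ) + (j:ℕ)*n
      have h4 : (r:ℕ) % n + j₀ * n = (r:ℕ) := by
        rw [hj₀def]; exact Nat.mod_add_div' _ _
      have h5 : (r:ℕ) % n < n := Nat.mod_lt _ hn0
      have : j₀ < (j:ℕ) := hmj ▸ hm
      nlinarith [this, h4, h5]
    · rw [if_neg hmj]
  -- the coefficient at (r % n, j₀) is 1
  have i₀ : Fin n := ⟨(r:ℕ) % n, Nat.mod_lt _ hn0⟩
  have h_lo : (flatv d (B r) ⟨(r:ℕ) % n, Nat.mod_lt _ hn0⟩).coeff j₀ = 1 := by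
    simp only [flatv, Polynomial.finset_sum_coeff, Polynomial.coeff_C_mul,
      Polynomial.coeff_X_pow, mul_ite, mul_one, mul_zero]
    rw [Finset.sum_eq_single (⟨j₀, hj₀⟩ : Fin (d+1))]
    · rw [if_pos rfl]
      have hidx : ((⟨(r:ℕ) % n + j₀ * n, by
          have := (⟨j₀, hj₀⟩ : Fin (d+1)).isLt
          calc (r:ℕ) % n + j₀*n < n + j₀*n := Nat.add_lt_add_right (Nat.mod_lt _ hn0) _
            _ = n * (j₀+1) := by ring
            _ ≤ n * (d+1) := Nat.mul_le_mul le_rfl hj₀⟩ : Fin (n*(d+1)))) = r := by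
        apply Fin.ext
        show (r:ℕ) % n + j₀ * n = (r:ℕ)
        rw [hj₀def]; exact Nat.mod_add_div' _ _
      rw [hidx]; exact h2
    · intro j _ hj
      rw [if_neg]
      intro hc
      exact hj (Fin.ext hc.symm)
    · intro h; exact absurd (Finset.mem_univ _) h
  refine le_antisymm (Finset.sup_le fun i _ => ?_) ?_
  · exact Polynomial.natDegree_le_iff_coeff_eq_zero.2 fun m hm => h_hi i m hm
  · exact le_trans
      (Polynomial.le_natDegree_of_ne_zero (by rw [h_lo]; exact one_ne_zero))
      (Finset.le_sup (f := fun i => (flatv d (B r) i).natDegree)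
        (Finset.mem_univ ⟨(r:ℕ) % n, Nat.mod_lt _ hn0⟩))
end
end
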